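/- arXiv:2412.13766 — 4 statements merged into one kernel-verified Lean document; each statement's English description precedes it below -/
import Mathlib

section
/- Let $\rho : V \to V$ be a unicycle configuration on a finite set $V$ (its functional digraph has exactly one directed cycle) with $x$ on its unique cycle, and let $\eta : V \to V$ agree with $\rho$ on $V \setminus \{x\}$ with $\eta(x) = y$ for some $y$. Then $\eta$ is a unicycle configuration and $y = \eta(x)$ lies on the unique cycle of $\eta$. -/
/-- `C` is (the vertex set of) a directed cycle of the functional digraph of `ρ`. -/
def IsCycle {V : Type*} (ρ : V → V) (C : Set V) : Prop :=
  C.Nonempty ∧ (∀ v ∈ C, ρ v ∈ C) ∧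
    ∀ v ∈ C, ∀ w ∈ C, ∃ k : ℕ, 0 < k ∧ ρ^[k] v = w

/-- A unicycle configuration: the functional digraph of `ρ` has exactly one directed cycle. -/
def IsUnicycle {V : Type*} (ρ : V → V) : Prop := ∃! C : Set V, IsCycle ρ C

/-- If `ρ` is a unicycle configuration with `x` on its unique cycle, and `η` agrees with
`ρ` off `x` with `η x = y`, then `η` is a unicycle configuration and `y = η x` lies on
the unique cycle of `η`. -/
theorem unicycle_step_invariance {V : Type*} [Finite V] (ρ η : V → V) (x y : V)
    (hρ : IsUnicycle ρ) (hx : ∀ C : Set V, IsCycle ρ C → x ∈ C)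
    (hagree : ∀ v : V, v ≠ x → η v = ρ v) (hy : η x = y) :
    IsUnicycle η ∧ ∀ C : Set V, IsCycle η C → y ∈ C := by
  obtain ⟨D, hD, hDuniq⟩ := hρ
  -- closure under iterates
  have iter_mem : ∀ (f : V → V) (C : Set V), (∀ v ∈ C, f v ∈ C) →
      ∀ v ∈ C, ∀ k, f^[k] v ∈ C := by
    intro f C hC v hv k
    induction k generalizing v with
    | zero => simpa
    | succ n ih => rw [Function.iterate_succ_apply]; exact ih _ (hC v hv)
  -- every η-cycle contains x, hence y
  have key : ∀ C : Set V, IsCycle η C → x ∈ C := by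
    intro C hC
    by_contra hxC
    have hclosed : ∀ v ∈ C, ρ v ∈ C := by
      intro v hv
      rw [← hagree v (fun h => hxC (h ▸ hv))]
      exact hC.2.1 v hv
    have hiter : ∀ v ∈ C, ∀ k, ρ^[k] v = η^[k] v := by
      intro v hv k
      induction k generalizing v with
      | zero => rfl
      | succ n ih =>
        rw [Function.iterate_succ_apply, Function.iterate_succ_apply,
          hagree v (fun h => hxC (h ▸ hv)), ih _ (hclosed v hv)]
    have hCρ : IsCycle ρ C := by
      refine ⟨hC.1, hclosed, fun v hv w hw => ?_⟩
      obtain ⟨k, hk, hkv⟩ := hC.2.2 v hv w hw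
      exact ⟨k, hk, by rw [hiter v hv k, hkv]⟩
    exact hxC (hDuniq C hCρ ▸ hx C hCρ)
  have keyy : ∀ C : Set V, IsCycle η C → y ∈ C := by
    intro C hC
    have := hC.2.1 x (key C hC)
    rwa [hy] at this
  -- existence of a periodic point of η
  have hper : ∃ z p, 0 < p ∧ η^[p] z = z := by
    obtain ⟨a, b, hab, hfe⟩ :=
      Finite.exists_ne_map_eq_of_infinite (fun n : ℕ => η^[n] x)

    rcases lt_or_gt_of_ne hab with h | h
    · refine ⟨η^[a] x, b - a, by omega, ?_⟩
      rw [← Function.iterate_add_apply, Nat.sub_add_cancel h.le, ← hfe]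
    · refine ⟨η^[b] x, a - b, by omega, ?_⟩
      rw [← Function.iterate_add_apply, Nat.sub_add_cancel h.le, hfe]
  obtain ⟨z, p, hp, hz⟩ := hper
  have hzt : ∀ t, η^[p * t] z = z := by
    intro t
    induction t with
    | zero => rfl
    | succ n ih => rw [Nat.mul_succ, Function.iterate_add_apply, hz, ih]
  -- the orbit of z is a cycle of η
  set C₀ : Set V := {w | ∃ i : ℕ, η^[i] z = w} with hC₀def
  have hC₀ : IsCycle η C₀ := by
    refine ⟨⟨z, 0, rfl⟩, ?_, ?_⟩
    · rintro v ⟨i, rfl⟩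
      exact ⟨i + 1, by rw [Function.iterate_succ_apply']⟩
    · rintro v ⟨i, rfl⟩ w ⟨j, rfl⟩
      have hle : i + 1 ≤ p * (i + 1) := Nat.le_mul_of_pos_left _ hp
      refine ⟨j + p * (i + 1) - i, by omega, ?_⟩
      rw [← Function.iterate_add_apply]
      have : j + p * (i + 1) - i + i = j + p * (i + 1) := by omega
      rw [this, Function.iterate_add_apply, hzt]
  refine ⟨⟨C₀, hC₀, fun C hC => ?_⟩, keyy⟩
  -- uniqueness: any two cycles contain x, hence coincide
  have sub : ∀ C C' : Set V, IsCycle η C → IsCycle η C' → C ⊆ C' := by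
    intro C C' hC hC' w hw
    obtain ⟨k, _, hk⟩ := hC.2.2 x (key C hC) w hw
    exact hk ▸ iter_mem η C' hC'.2.1 x (key C' hC') k
  exact Set.Subset.antisymm (sub C C₀ hC hC₀) (sub C₀ C hC₀ hC)
end

section
/- Let $P$ be the transition matrix of the total chain of a locally Markov walk on a finite strongly connected graph $G$, restricted to recurrent states $\mathsf U_G$, and let $\zeta : \mathsf U_G \to \mathsf U_G$ be the unicycle permutation $\zeta(x,\rho) = (\rho(x), \rho)$ with associated permutation matrix $A_{\mathsf{CYC}}$. Then $(P A_{\mathsf{CYC}}^T)((x,\rho),(y,\eta)) = \mathsf m_x(\rho(x), \eta(x))$ if $x = y$ and $\rho, \eta$ agree off $x$, and equals $0$ otherwise; consequently $P = B_{\mathrm{loc}} A_{\mathsf{CYC}}$ where $B_{\mathrm{loc}} = P A_{\mathsf{CYC}}^T$ is block diagonal with blocks the local transition matrices. -/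
open Matrix

/-- The recurrent states of the total chain: pairs `(x, ρ)` where `ρ` is a spanning
unicycle and the particle location `x` lies on its unique cycle. -/
abbrev UG (V : Type*) : Type _ :=
  {p : V × (V → V) // IsUnicycle p.2 ∧ ∀ C : Set V, IsCycle p.2 C → p.1 ∈ C}

noncomputable instance {V : Type*} [Finite V] : Fintype (UG V) := Fintype.ofFinite _

lemma iterate_mem_aux {V : Type*} {ρ : V → V} {C : Set V} (hC : ∀ v ∈ C, ρ v ∈ C) :
    ∀ k : ℕ, ∀ v ∈ C, ρ^[k] v ∈ C := by
  intro k
  induction k with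
  | zero => intro v hv; simpa using hv
  | succ n ih =>
      intro v hv
      rw [Function.iterate_succ_apply]
      exact ih _ (hC v hv)

lemma iterate_congr_aux {V : Type*} {f g : V → V} {C : Set V}
    (hmem : ∀ v ∈ C, f v ∈ C) (heq : ∀ v ∈ C, f v = g v) :
    ∀ k : ℕ, ∀ v ∈ C, f^[k] v = g^[k] v := by
  intro k
  induction k with
  | zero => intro v _; simp
  | succ n ih =>
      intro v hv
      rw [Function.iterate_succ_apply, Function.iterate_succ_apply,
        ih (f v) (hmem v hv), heq v hv]

lemma IsCycle.injOn' {V : Type*} [Finite V] {ρ : V → V} {C : Set V}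
    (h : IsCycle ρ C) : Set.InjOn ρ C := by
  have hmaps : Set.MapsTo ρ C C := fun v hv => h.2.1 v hv
  have hsurj : Set.SurjOn ρ C C := by
    intro w hw
    obtain ⟨v, hv⟩ := h.1
    obtain ⟨k, hk, hkv⟩ := h.2.2 v hv w hw
    obtain ⟨k, rfl⟩ : ∃ k', k = k' + 1 := ⟨k - 1, by omega⟩
    rw [Function.iterate_succ_apply'] at hkv
    exact ⟨ρ^[k] v, iterate_mem_aux h.2.1 k v hv, hkv⟩
  exact ((Set.toFinite C).surjOn_iff_bijOn_of_mapsTo hmaps).mp hsurj |>.injOn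

/-- Single step decomposition of the total chain of a locally Markov walk: if `P` is the
transition matrix of the total chain (restricted to recurrent states `UG V`),
`ζ` the unicycle permutation `ζ (x, ρ) = (ρ x, ρ)` and `A` its permutation matrix, then
`P * Aᵀ` is the block diagonal matrix of the local transition probabilities `m`, and
consequently `P = (P * Aᵀ) * A`. -/
theorem total_chain_single_step_decomposition
    {V : Type*} [Fintype V] [DecidableEq V]
    (m : V → V → V → ℝ)
    (ζ : UG V ≃ UG V)
    (hζ : ∀ s : UG V, (ζ s).1 = (s.1.2 s.1.1, s.1.2))
    (P A : Matrix (UG V) (UG V) ℝ)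
    (hP : ∀ s t : UG V, P s t =
      if t.1.2 = Function.update s.1.2 s.1.1 t.1.1
      then m s.1.1 (s.1.2 s.1.1) t.1.1 else 0)
    (hA : ∀ s t : UG V, A s t = if ζ s = t then 1 else 0) :
    (∀ s t : UG V, (P * Aᵀ) s t =
      if s.1.1 = t.1.1 ∧ (∀ v : V, v ≠ s.1.1 → t.1.2 v = s.1.2 v)
      then m s.1.1 (s.1.2 s.1.1) (t.1.2 s.1.1) else 0)
    ∧ P = (P * Aᵀ) * A := by
  constructor
  · intro s t
    have hPA : (P * Aᵀ) s t = P s (ζ t) := by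
      rw [Matrix.mul_apply, Finset.sum_eq_single (ζ t)]
      · simp [Matrix.transpose_apply, hA]
      · intro u _ hu
        rw [Matrix.transpose_apply, hA]
        simp [Ne.symm hu]
      · simp
    have h1 : (ζ t).1.1 = t.1.2 t.1.1 := by rw [hζ]
    have h2 : (ζ t).1.2 = t.1.2 := by rw [hζ]
    rw [hPA, hP, h1, h2]
    by_cases hc : s.1.1 = t.1.1 ∧ (∀ v : V, v ≠ s.1.1 → t.1.2 v = s.1.2 v)
    · obtain ⟨hx, hoff⟩ := hc
      have hcond : t.1.2 = Function.update s.1.2 s.1.1 (t.1.2 t.1.1) := by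
        funext v
        by_cases hv : v = s.1.1
        · subst hv; rw [Function.update_self, hx]
        · rw [Function.update_of_ne hv, hoff v hv]
      rw [if_pos hcond, if_pos ⟨hx, hoff⟩, hx]
    · rw [if_neg hc]
      by_cases hcond : t.1.2 = Function.update s.1.2 s.1.1 (t.1.2 t.1.1)
      · -- derive a contradiction: the condition forces s.1.1 = t.1.1
        exfalso
        have hoff : ∀ v : V, v ≠ s.1.1 → t.1.2 v = s.1.2 v := by
          intro v hv
          conv_lhs => rw [hcond]
          rw [Function.update_of_ne hv]
        have hne : s.1.1 ≠ t.1.1 := fun h => hc ⟨h, hoff⟩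
        have htsx : t.1.2 s.1.1 = t.1.2 t.1.1 := by
          conv_lhs => rw [hcond]
          rw [Function.update_self]
        obtain ⟨C, hC, _⟩ := t.2.1
        have htx : t.1.1 ∈ C := t.2.2 C hC
        by_cases hsxC : s.1.1 ∈ C
        · exact hne (hC.injOn' hsxC htx htsx)
        · -- C is also a cycle of s.1.2, so s.1.1 ∈ C, contradiction
          have heqC : ∀ v ∈ C, t.1.2 v = s.1.2 v := fun v hv =>
            hoff v (fun h => hsxC (h ▸ hv))
          have hCs : IsCycle s.1.2 C := by
            refine ⟨hC.1, ?_, ?_⟩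
            · intro v hv
              rw [← heqC v hv]
              exact hC.2.1 v hv
            · intro v hv w hw
              obtain ⟨k, hk, hkv⟩ := hC.2.2 v hv w hw
              exact ⟨k, hk, by rw [← iterate_congr_aux hC.2.1 heqC k v hv]; exact hkv⟩
          exact hsxC (s.2.2 C hCs)
      · rw [if_neg hcond]
  · have hAA : Aᵀ * A = 1 := by
      ext u w
      rw [Matrix.mul_apply, Finset.sum_eq_single (ζ.symm u)]
      · rw [Matrix.transpose_apply, hA, hA, Matrix.one_apply]
        simp
      · intro b _ hb
        rw [Matrix.transpose_apply, hA]
        have : ζ b ≠ u := fun h => hb (by rw [← h, Equiv.symm_apply_apply])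
        simp [this]
      · simp
    rw [Matrix.mul_assoc, hAA, Matrix.mul_one]
end

section
/- Define $\mu(x,\rho) = \frac{1}{Z}\prod_{y \in V} q_y(\rho(y))$ for $(x,\rho) \in \mathsf U_G$ (and $0$ otherwise), where $Z = \sum_{x \in V} \sum_{T \in \mathsf{TREE}_x(G)} \prod_{(y,z)\in T} q_y(z)$. Then $\mu$ is a stationary distribution of the total chain: $\mu P = \mu$, where $P$ is the transition matrix of the total chain of the locally Markov walk. -/
section helpers
variable {V : Type*}

lemma iterate_mem {ρ : V → V} {C : Set V} (hC : ∀ v ∈ C, ρ v ∈ C) :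
    ∀ k, ∀ v ∈ C, ρ^[k] v ∈ C := by
  intro k
  induction k with
  | zero => simp
  | succ n ih =>
    intro v hv
    rw [Function.iterate_succ_apply]
    exact ih _ (hC v hv)

lemma cycle_eq_of_mem {ρ : V → V} {C D : Set V} (hC : IsCycle ρ C) (hD : IsCycle ρ D)
    {x : V} (hxC : x ∈ C) (hxD : x ∈ D) : C = D := by
  ext w
  constructor
  · intro hw
    obtain ⟨k, -, hk⟩ := hC.2.2 x hxC w hw
    exact hk ▸ iterate_mem hD.2.1 k x hxD
  · intro hw
    obtain ⟨k, -, hk⟩ := hD.2.2 x hxD w hw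
    exact hk ▸ iterate_mem hC.2.1 k x hxC

lemma isCycle_congr {ρ σ : V → V} {C : Set V} (hC : IsCycle ρ C)
    (h : ∀ v ∈ C, ρ v = σ v) : IsCycle σ C := by
  have hiter : ∀ k, ∀ v ∈ C, σ^[k] v = ρ^[k] v := by
    intro k
    induction k with
    | zero => simp
    | succ n ih =>
      intro v hv
      rw [Function.iterate_succ_apply', Function.iterate_succ_apply', ih v hv,
        h _ (iterate_mem hC.2.1 n v hv)]
  refine ⟨hC.1, ?_, ?_⟩
  · intro v hv; rw [← h v hv]; exact hC.2.1 v hv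
  · intro v hv w hw
    obtain ⟨k, hk, he⟩ := hC.2.2 v hv w hw
    exact ⟨k, hk, by rw [hiter k v hv, he]⟩

lemma exists_cycle [Finite V] (ρ : V → V) (v : V) :
    ∃ C, IsCycle ρ C ∧ ∃ k, ρ^[k] v ∈ C := by
  obtain ⟨i, j, hne, hij⟩ := Finite.exists_ne_map_eq_of_infinite (fun k : ℕ => ρ^[k] v)
  wlog hlt : i < j generalizing i j
  · exact this j i hne.symm hij.symm (by omega)
  have hij' : ρ^[i] v = ρ^[j] v := hij
  set p := j - i with hp
  have hppos : 0 < p := by omega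
  have hper : ∀ t, i ≤ t → ρ^[t + p] v = ρ^[t] v := by
    intro t ht
    have h1 : t + p = (t - i) + j := by omega
    have h2 : t = (t - i) + i := by omega
    rw [h1, Function.iterate_add_apply, ← hij']
    conv_rhs => rw [h2, Function.iterate_add_apply]
  have hpern : ∀ n t, i ≤ t → ρ^[t + n * p] v = ρ^[t] v := by
    intro n
    induction n with
    | zero => simp
    | succ n ih =>
      intro t ht
      have h1 : t + (n + 1) * p = (t + p) + n * p := by ring
      rw [h1, ih _ (by omega), hper t ht]
  refine ⟨{w | ∃ t, i ≤ t ∧ ρ^[t] v = w}, ⟨⟨ρ^[i] v, ⟨i, le_refl _, rfl⟩⟩, ?_, ?_⟩,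
    ⟨i, ⟨i, le_refl _, rfl⟩⟩⟩
  · rintro w ⟨t, ht, rfl⟩
    exact ⟨t + 1, by omega, by rw [Function.iterate_succ_apply']⟩
  · rintro a ⟨s, hs, rfl⟩ b ⟨t, ht, rfl⟩
    have hsp : s + 1 ≤ (s + 1) * p := Nat.le_mul_of_pos_right _ hppos
    refine ⟨t + (s + 1) * p - s, by omega, ?_⟩
    rw [← Function.iterate_add_apply]
    have h1 : t + (s + 1) * p - s + s = t + (s + 1) * p := by omega
    rw [h1, hpern _ t ht]

lemma injOn_cycle [Finite V] {ρ : V → V} {C : Set V} (hC : IsCycle ρ C) :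
    Set.InjOn ρ C := by
  have hmaps : Set.MapsTo ρ C C := hC.2.1
  have hsurj : Set.SurjOn ρ C C := by
    intro w hw
    obtain ⟨k, hk, he⟩ := hC.2.2 w hw w hw
    refine ⟨ρ^[k - 1] w, iterate_mem hC.2.1 _ w hw, ?_⟩
    rw [← Function.iterate_succ_apply' ρ (k - 1) w]
    have hks : (k - 1).succ = k := by omega
    rw [hks, he]
  exact ((C.toFinite.surjOn_iff_bijOn_of_mapsTo hmaps).mp hsurj).injOn

end helpers

open Classical in
/-- The stationary distribution of the total chain of a locally Markov walk: if each local
chain `m x` has stationary distribution `q x` and the total chain moves from `(x, ρ)` to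
`(y, update ρ x y)` with probability `m x (ρ x) y`, then
`μ (x, ρ) = (1 / Z) * ∏ y, q y (ρ y)` (with `Z` the total weight of rooted spanning trees,
a tree rooted at `x` being encoded as `ρ` with `ρ x = x` and every vertex reaching `x`)
satisfies `μ P = μ`. -/
theorem total_chain_stationary_distribution
    {V : Type*} [Fintype V] [DecidableEq V]
    (q : V → V → ℝ) (m : V → V → V → ℝ)
    (hstat : ∀ x y : V, ∑ z : V, q x z * m x z y = q x y)
    (P : Matrix (UG V) (UG V) ℝ)
    (hP : ∀ s t : UG V, P s t =
      if t.1.2 = Function.update s.1.2 s.1.1 t.1.1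
      then m s.1.1 (s.1.2 s.1.1) t.1.1 else 0)
    (Z : ℝ)
    (hZ : Z = ∑ x : V, ∑ ρ : V → V,
      if (ρ x = x ∧ ∀ v : V, ∃ k : ℕ, ρ^[k] v = x)
      then ∏ v ∈ Finset.univ.erase x, q v (ρ v) else 0)
    (μ : UG V → ℝ)
    (hμ : ∀ s : UG V, μ s = (1 / Z) * ∏ v : V, q v (s.1.2 v)) :
    ∀ t : UG V, ∑ s : UG V, μ s * P s t = μ t := by
  intro t
  obtain ⟨C, hC, huniq⟩ := id t.2.1
  have hyC : t.1.1 ∈ C := t.2.2 C hC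
  obtain ⟨k, hk, hky⟩ := hC.2.2 t.1.1 hyC t.1.1 hyC
  set η : V → V := t.1.2 with hηdef
  set x₀ : V := η^[k - 1] t.1.1 with hx₀def
  have hx₀C : x₀ ∈ C := iterate_mem hC.2.1 _ t.1.1 hyC
  have hηx₀ : η x₀ = t.1.1 := by
    rw [hx₀def, ← Function.iterate_succ_apply' η (k - 1) t.1.1]
    have hks : (k - 1).succ = k := by omega
    rw [hks, hky]
  -- membership of modified maps in UG
  have hmem' : ∀ z : V, IsUnicycle (Function.update η x₀ z) ∧
      ∀ D : Set V, IsCycle (Function.update η x₀ z) D → x₀ ∈ D := by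
    intro z
    have hx₀mem : ∀ D : Set V, IsCycle (Function.update η x₀ z) D → x₀ ∈ D := by
      intro D hD
      by_contra hx
      have hDη : IsCycle η D := isCycle_congr hD
        (fun v hv => Function.update_of_ne (by rintro rfl; exact hx hv) _ _)
      exact hx ((huniq D hDη).symm ▸ hx₀C)
    obtain ⟨D₀, hD₀, -⟩ := exists_cycle (Function.update η x₀ z) x₀
    exact ⟨⟨D₀, hD₀, fun D hD => cycle_eq_of_mem hD hD₀ (hx₀mem D hD) (hx₀mem D₀ hD₀)⟩, hx₀mem⟩
  set e : V → UG V := fun z => ⟨(x₀, Function.update η x₀ z), hmem' z⟩ with hedef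
  have einj : Function.Injective e := by
    intro z₁ z₂ h
    have h2 := congrArg (fun s : UG V => s.1.2 x₀) h
    simpa [hedef] using h2
  -- any state feeding into t is in the range of e
  have hrange : ∀ s : UG V, η = Function.update s.1.2 s.1.1 t.1.1 → s = e (s.1.2 s.1.1) := by
    intro s hcond
    obtain ⟨⟨x, ρ⟩, hs⟩ := s
    simp only at hcond ⊢
    have hηx : η x = t.1.1 := by rw [hcond]; exact Function.update_self x t.1.1 ρ
    have hρη : ∀ v, v ≠ x → η v = ρ v := by
      intro v hv; rw [hcond]; exact Function.update_of_ne hv _ _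
    have hxC : x ∈ C := by
      by_cases h : x ∈ C
      · exact h
      · exact hs.2 C (isCycle_congr hC (fun v hv => hρη v fun hvx => h (hvx ▸ hv)))
    have hxx₀ : x = x₀ := injOn_cycle hC hxC hx₀C (by rw [hηx, hηx₀])
    have hρ : ρ = Function.update η x₀ (ρ x) := by
      funext v
      by_cases hv : v = x₀
      · subst hv
        rw [Function.update_self, hxx₀]
      · rw [Function.update_of_ne hv, ← hρη v (by rw [hxx₀]; exact hv)]
    apply Subtype.ext
    simp only [hedef]
    rw [Prod.mk.injEq]
    exact ⟨hxx₀, hρ⟩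
  -- the weight outside x₀
  set K : ℝ := ∏ v ∈ Finset.univ.erase x₀, q v (η v) with hKdef
  have hμe : ∀ z : V, μ (e z) = 1 / Z * (q x₀ z * K) := by
    intro z
    rw [hμ]
    congr 1
    rw [← Finset.mul_prod_erase Finset.univ _ (Finset.mem_univ x₀)]
    simp only [hedef]
    rw [Function.update_self]
    congr 1
    exact Finset.prod_congr rfl fun v hv => by
      rw [Function.update_of_ne (Finset.ne_of_mem_erase hv)]
  have hPe : ∀ z : V, P (e z) t = m x₀ z t.1.1 := by
    intro z
    rw [hP]
    have hcond : t.1.2 = Function.update ((e z).1.2) ((e z).1.1) t.1.1 := by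
      simp only [hedef]
      rw [Function.update_idem, ← hηx₀, Function.update_eq_self, hηdef]
    rw [if_pos hcond]
    simp [hedef]
  have hμt : μ t = 1 / Z * (q x₀ t.1.1 * K) := by
    rw [hμ]
    congr 1
    rw [← Finset.mul_prod_erase Finset.univ _ (Finset.mem_univ x₀), ← hηdef, hηx₀]
  have h1 : ∑ s : UG V, μ s * P s t = ∑ s ∈ Finset.univ.image e, μ s * P s t := by
    refine (Finset.sum_subset (Finset.subset_univ _) ?_).symm
    intro s _ hs
    rw [hP]
    split_ifs with hcond
    · exact absurd (Finset.mem_image.mpr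
        ⟨s.1.2 s.1.1, Finset.mem_univ _, (hrange s hcond).symm⟩) hs
    · ring
  have h2 : ∑ s ∈ Finset.univ.image e, μ s * P s t = ∑ z : V, μ (e z) * P (e z) t :=
    Finset.sum_image (fun z₁ _ z₂ _ h => einj h)
  rw [h1, h2]
  have h3 : ∀ z : V, μ (e z) * P (e z) t = 1 / Z * K * (q x₀ z * m x₀ z t.1.1) := by
    intro z
    rw [hμe, hPe]
    ring
  rw [Finset.sum_congr rfl fun z _ => h3 z, ← Finset.mul_sum, hstat, hμt]
  ring
end

section
/- Let $P$ be the transition matrix of the uniform unicycle walk on a finite connected graph $G$, and let $f$ be any vector in the range of $P$ (in particular any generalized eigenvector to a nonzero eigenvalue). Then for every vertex $x$, every oriented spanning tree $T$ rooted at $x$, and all neighbors $y, z$ of $x$: $f(x, T \cup \{(x,y)\}) = f(x, T \cup \{(x,z)\})$. -/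
/-- For the uniform unicycle walk (total chain of the simple random walk) on a finite
connected graph `G`, any vector `f` in the range of the transition matrix `P` — in
particular any generalized eigenvector to a nonzero eigenvalue — takes the same value on
all states `(x, T ∪ {(x,y)})`, `y ∈ N_x`, obtained from a fixed root `x` and a fixed
oriented spanning tree `T` rooted at `x` by varying the outgoing edge at `x`. -/
theorem uniform_unicycle_walk_range_constant_on_blocks
    {V : Type*} [Fintype V] [DecidableEq V]
    (E : V → V → Prop) [DecidableRel E]
    (hconn : ∀ x y : V, Relation.ReflTransGen E x y)
    (P : Matrix (UG V) (UG V) ℝ)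
    (hP : ∀ s t : UG V, P s t =
      if E s.1.1 t.1.1 ∧ t.1.2 = Function.update s.1.2 s.1.1 t.1.1
      then 1 / ((Finset.univ.filter (fun y => E s.1.1 y)).card : ℝ) else 0)
    (f : UG V → ℝ) (hf : ∃ g : UG V → ℝ, f = P.mulVec g) :
    ∀ s t : UG V, s.1.1 = t.1.1 → (∀ v : V, v ≠ s.1.1 → s.1.2 v = t.1.2 v) →
      f s = f t := by
  obtain ⟨g, rfl⟩ := hf
  intro s t hx hρ
  have hupd : ∀ a, Function.update s.1.2 s.1.1 a = Function.update t.1.2 t.1.1 a := by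
    intro a
    funext v
    by_cases hv : v = s.1.1
    · subst hv; rw [Function.update_self, hx, Function.update_self]
    · rw [Function.update_of_ne hv, Function.update_of_ne (hx ▸ hv), hρ v hv]
  unfold Matrix.mulVec dotProduct
  apply Finset.sum_congr rfl
  intro u _
  show P s u * g u = P t u * g u
  rw [hP, hP, hupd, hx]
end
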